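/- For all integers m and n, the family (A(m,k)·B(n,k))_{k∈ℤ} has only finitely many nonzero members, and 2·Σ_{k∈ℤ} A(m,k)·B(n,k) = 2·δ_{m,n} + β·δ_{m,n−1} in ℚ[β]. (Equivalently, the β-deformed neutral fermions satisfy the anticommutation relation [(φ^{(β)}_m)^*, φ^{[β]}_n]_+ = 2δ_{m,n} + βδ_{m,n−1}.) -/

import Mathlib

/-!
Statement 0: the β-deformed neutral fermions satisfy
`[(φ^{(β)}_m)^*, φ^{[β]}_n]_+ = 2δ_{m,n} + βδ_{m,n−1}`, expressed through their
coefficient families `A(m,k)`, `B(n,k)`: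
the family `(A(m,k)·B(n,k))_{k∈ℤ}` has finite support and
`2·Σ_k A(m,k)·B(n,k) = 2·δ_{m,n} + β·δ_{m,n−1}` in `ℚ(β)`.
-/

noncomputable section

open scoped BigOperators

/-- The base field `K = ℚ(β)`. -/
abbrev K : Type := RatFunc ℚ

/-- The indeterminate `β`. -/
def β : K := RatFunc.X

/-- The geometric-series expansion of `1/(1+cz)` as a formal power series. -/
def geomPS (c : K) : PowerSeries K := PowerSeries.mk fun n => (-c) ^ n

/-- `A(m,k) = [z^m](z+β/2)^k` for `k ≥ 0`, and
`A(m,k) = [z^m]((z⁻¹/(1+(β/2)z⁻¹))^{-k})` (a power series in `z⁻¹`) for `k < 0`. -/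
def Acoef (m k : ℤ) : K :=
  if 0 ≤ k then
    (if 0 ≤ m then ((Polynomial.X + Polynomial.C (β / 2)) ^ k.toNat).coeff m.toNat else 0)
  else
    (if m ≤ 0 then
      PowerSeries.coeff (-m).toNat ((PowerSeries.X * geomPS (β / 2)) ^ (-k).toNat) else 0)

/-- `B(n,k) = [z^n]((z/(1+(β/2)z))^k)` (a power series in `z`) for `k > 0`, and
`B(n,k) = [z^n]((z⁻¹+β/2)^{-k})` for `k ≤ 0`. -/
def Bcoef (n k : ℤ) : K :=
  if 0 < k then
    (if 0 ≤ n then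
      PowerSeries.coeff n.toNat ((PowerSeries.X * geomPS (β / 2)) ^ k.toNat) else 0)
  else
    (if n ≤ 0 then ((Polynomial.X + Polynomial.C (β / 2)) ^ (-k).toNat).coeff (-n).toNat else 0)

/-! ### Auxiliary lemmas -/

lemma hockey_nat (k j : ℕ) :
    ∑ i ∈ Finset.range (j + 1), (k + i).choose i = (k + 1 + j).choose j := by
  induction j with
  | zero => simp
  | succ j ih =>
    rw [Finset.sum_range_succ, ih]
    have hp := Nat.choose_succ_succ (k + j + 1) j
    have e1 : k + 1 + j = k + j + 1 := by omega
    have e2 : k + (j + 1) = k + j + 1 := by omega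
    have e3 : k + 1 + (j + 1) = k + j + 1 + 1 := by omega
    rw [e1, e2, e3, hp]

lemma coeff_geomPS (c : K) (j : ℕ) : PowerSeries.coeff j (geomPS c) = (-c) ^ j := by
  simp [geomPS]

lemma coeff_geomPS_pow (c : K) (k : ℕ) : ∀ j : ℕ,
    PowerSeries.coeff j (geomPS c ^ (k + 1)) = (-c) ^ j * ((k + j).choose j : K) := by
  induction k with
  | zero => intro j; simp [geomPS]
  | succ k ih =>
    intro j
    rw [pow_succ, PowerSeries.coeff_mul,
      Finset.Nat.sum_antidiagonal_eq_sum_range_succ_mk]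
    have hterm : ∀ i ∈ Finset.range (j + 1),
        PowerSeries.coeff i (geomPS c ^ (k + 1)) * PowerSeries.coeff (j - i) (geomPS c)
          = (-c) ^ j * ((k + i).choose i : K) := by
      intro i hi
      rw [Finset.mem_range] at hi
      rw [ih, coeff_geomPS]
      calc (-c) ^ i * ((k + i).choose i : K) * (-c) ^ (j - i)
          = (-c) ^ (i + (j - i)) * ((k + i).choose i : K) := by rw [pow_add]; ring
        _ = (-c) ^ j * ((k + i).choose i : K) := by
            rw [show i + (j - i) = j from by omega]
    rw [Finset.sum_congr rfl hterm, ← Finset.mul_sum]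
    have hh := congrArg (fun t : ℕ => (t : K)) (hockey_nat k j)
    push_cast at hh
    rw [hh]

lemma coeff_X_geom_pow (c : K) (k N : ℕ) :
    PowerSeries.coeff N ((PowerSeries.X * geomPS c) ^ k)
      = if k ≤ N then (-c) ^ (N - k) * ((N - 1).choose (N - k) : K) else 0 := by
  rw [mul_pow, PowerSeries.coeff_X_pow_mul']
  cases k with
  | zero =>
    simp only [pow_zero, PowerSeries.coeff_one, Nat.zero_le, if_true, Nat.sub_zero]
    cases N with
    | zero => simp
    | succ N => simp [Nat.choose_succ_self]
  | succ k =>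
    split_ifs with h
    · rw [coeff_geomPS_pow]
      rw [show k + (N - (k + 1)) = N - 1 from by omega]
    · rfl

lemma Acoef_nat (m' k' : ℕ) :
    Acoef (m' : ℤ) (k' : ℤ) = (β / 2) ^ (k' - m') * (k'.choose m' : K) := by
  rw [Acoef, if_pos (Int.natCast_nonneg _), if_pos (Int.natCast_nonneg _)]
  simp [Polynomial.coeff_X_add_C_pow]

lemma Bcoef_nat (n' k' : ℕ) :
    Bcoef (n' : ℤ) (k' : ℤ)
      = if k' ≤ n' then (-(β / 2)) ^ (n' - k') * ((n' - 1).choose (n' - k') : K) else 0 := by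
  rw [Bcoef]
  cases k' with
  | zero =>
    rw [if_neg (by simp)]
    by_cases hn : n' = 0
    · subst hn; simp
    · rw [if_neg (by exact_mod_cast (by omega : ¬ (n' : ℤ) ≤ 0)), if_pos (Nat.zero_le _)]
      have h0 : (n' - 1).choose (n' - 0) = 0 := Nat.choose_eq_zero_of_lt (by omega)
      rw [h0, Nat.cast_zero, mul_zero]
  | succ k =>
    rw [if_pos (by exact_mod_cast Nat.succ_pos k), if_pos (Int.natCast_nonneg _)]
    simp only [Int.toNat_natCast]
    exact coeff_X_geom_pow _ _ _

lemma Acoef_neg (M K' : ℕ) (hM : 1 ≤ M) :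
    Acoef (-(M : ℤ)) (-(K' : ℤ))
      = if K' ≤ M then (-(β / 2)) ^ (M - K') * ((M - 1).choose (M - K') : K) else 0 := by
  cases K' with
  | zero =>
    rw [Acoef, if_pos (by simp), if_neg (by omega), if_pos (Nat.zero_le _)]
    have h0 : (M - 1).choose (M - 0) = 0 := Nat.choose_eq_zero_of_lt (by omega)
    rw [h0, Nat.cast_zero, mul_zero]
  | succ k =>
    rw [Acoef, if_neg (by omega), if_pos (by omega)]
    simp only [neg_neg, Int.toNat_natCast]
    exact coeff_X_geom_pow _ _ _

lemma Bcoef_neg (N K' : ℕ) :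
    Bcoef (-(N : ℤ)) (-(K' : ℤ)) = (β / 2) ^ (K' - N) * (K'.choose N : K) := by
  rw [Bcoef, if_neg (by omega), if_pos (by omega)]
  simp [Polynomial.coeff_X_add_C_pow]

lemma Acoef_eq_zero {m k : ℤ} (h : k < m) : Acoef m k = 0 := by
  rw [Acoef]
  split_ifs with h1 h2 h3
  · rw [Polynomial.coeff_X_add_C_pow]
    have hx : k.toNat < m.toNat := by omega
    simp [Nat.choose_eq_zero_of_lt hx]
  · rfl
  · rw [coeff_X_geom_pow, if_neg (by omega)]
  · rfl

lemma Bcoef_eq_zero {n k : ℤ} (h : n < k) : Bcoef n k = 0 := by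
  rw [Bcoef]
  split_ifs with h1 h2 h3
  · rw [coeff_X_geom_pow, if_neg (by omega)]
  · rfl
  · rw [Polynomial.coeff_X_add_C_pow]
    have hx : (-k).toNat < (-n).toNat := by omega
    simp [Nat.choose_eq_zero_of_lt hx]
  · rfl

lemma choose_swap (N p j : ℕ) :
    N.choose j * (N - j).choose p = N.choose p * (N - p).choose j := by
  rcases le_or_gt (p + j) N with h | h
  · have h1 := Nat.choose_mul (n := N) (Nat.le_add_left j p)
    have h2 := Nat.choose_mul (n := N) (Nat.le_add_right p j)
    rw [show p + j - j = p from by omega] at h1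
    rw [show p + j - p = j from by omega] at h2
    have h3 : (p + j).choose p = (p + j).choose j := Nat.choose_symm_add
    rw [← h1, ← h2, h3]
  · rcases le_or_gt j N with hj | hj
    · have e1 : (N - j).choose p = 0 := Nat.choose_eq_zero_of_lt (by omega)
      rcases le_or_gt p N with hp | hp
      · have e2 : (N - p).choose j = 0 := Nat.choose_eq_zero_of_lt (by omega)
        rw [e1, e2]; ring
      · have e2 : N.choose p = 0 := Nat.choose_eq_zero_of_lt hp
        rw [e1, e2]; ring
    · have e1 : N.choose j = 0 := Nat.choose_eq_zero_of_lt hj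
      have e2 : (N - p).choose j = 0 := Nat.choose_eq_zero_of_lt (by omega)
      rw [e1, e2]; ring

lemma alt_K (q : ℕ) :
    ∑ j ∈ Finset.range (q + 1), (-1 : K) ^ j * (q.choose j : K)
      = if q = 0 then 1 else 0 := by
  have h := Int.alternating_sum_range_choose (n := q)
  have h2 := congrArg (fun z : ℤ => (z : K)) h
  simp only [Int.cast_sum, Int.cast_mul, Int.cast_pow, Int.cast_neg, Int.cast_one,
    Int.cast_natCast] at h2
  rw [h2]
  split_ifs <;> simp

lemma orth (N p : ℕ) :
    ∑ j ∈ Finset.range (N + 1), (-1 : K) ^ j * (N.choose j : K) * ((N - j).choose p : K)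
      = if p = N then 1 else 0 := by
  have hterm : ∀ j ∈ Finset.range (N + 1),
      (-1 : K) ^ j * (N.choose j : K) * ((N - j).choose p : K)
        = (N.choose p : K) * ((-1 : K) ^ j * ((N - p).choose j : K)) := by
    intro j _
    have := choose_swap N p j
    have hc : (N.choose j : K) * ((N - j).choose p : K)
        = (N.choose p : K) * ((N - p).choose j : K) := by exact_mod_cast this
    calc (-1 : K) ^ j * (N.choose j : K) * ((N - j).choose p : K)
        = (-1 : K) ^ j * ((N.choose j : K) * ((N - j).choose p : K)) := by ring
      _ = (-1 : K) ^ j * ((N.choose p : K) * ((N - p).choose j : K)) := by rw [hc]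
      _ = (N.choose p : K) * ((-1 : K) ^ j * ((N - p).choose j : K)) := by ring
  rw [Finset.sum_congr rfl hterm, ← Finset.mul_sum]
  rcases le_or_gt p N with hp | hp
  · have hsum : ∑ j ∈ Finset.range (N + 1), (-1 : K) ^ j * ((N - p).choose j : K)
        = ∑ j ∈ Finset.range ((N - p) + 1), (-1 : K) ^ j * ((N - p).choose j : K) := by
      symm
      apply Finset.sum_subset (Finset.range_subset_range.2 (by omega))
      intro j _ hj
      rw [Finset.mem_range, not_lt] at hj
      simp [Nat.choose_eq_zero_of_lt (show N - p < j from by omega)]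
    rw [hsum, alt_K]
    rcases eq_or_lt_of_le hp with he | hlt
    · subst he; simp
    · rw [if_neg (by omega), if_neg (by omega), mul_zero]
  · rw [Nat.choose_eq_zero_of_lt hp, if_neg (by omega)]
    simp

lemma key (q p : ℕ) :
    ∑ j ∈ Finset.range (q + 2), (-1 : K) ^ j * (q.choose j : K) * ((q + 1 - j).choose p : K)
      = (if p = q + 1 then 1 else 0) + (if p = q then 1 else 0) := by
  rw [Finset.sum_range_succ]
  have hlast : (-1 : K) ^ (q + 1) * (q.choose (q + 1) : K) * ((q + 1 - (q + 1)).choose p : K)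
      = 0 := by simp [Nat.choose_succ_self]
  rw [hlast, add_zero]
  cases p with
  | zero =>
    have hterm : ∀ j ∈ Finset.range (q + 1),
        (-1 : K) ^ j * (q.choose j : K) * ((q + 1 - j).choose 0 : K)
          = (-1 : K) ^ j * (q.choose j : K) := by
      intro j _; simp
    rw [Finset.sum_congr rfl hterm, alt_K]
    rcases eq_or_ne q 0 with rfl | hq
    · norm_num
    · rw [if_neg hq, if_neg (show ¬ (0 = q + 1) from by omega),
        if_neg (show ¬ (0 = q) from by omega)]
      norm_num
  | succ p' =>
    have hterm : ∀ j ∈ Finset.range (q + 1),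
        (-1 : K) ^ j * (q.choose j : K) * ((q + 1 - j).choose (p' + 1) : K)
          = (-1 : K) ^ j * (q.choose j : K) * ((q - j).choose p' : K)
            + (-1 : K) ^ j * (q.choose j : K) * ((q - j).choose (p' + 1) : K) := by
      intro j hj
      rw [Finset.mem_range] at hj
      rw [show q + 1 - j = (q - j) + 1 from by omega, Nat.choose_succ_succ]
      push_cast
      ring
    rw [Finset.sum_congr rfl hterm, Finset.sum_add_distrib, orth, orth]
    have e1 : (p' + 1 = q + 1) ↔ (p' = q) := by omega
    rw [if_congr e1 rfl rfl]

lemma int_add_nat_inj (a : ℤ) : Function.Injective (fun j : ℕ => a + (j : ℤ)) :=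
  fun x y h => by exact_mod_cast add_left_cancel h

lemma Icc_int_eq_map (a b : ℤ) :
    Finset.Icc a b = (Finset.range ((b + 1 - a).toNat)).map
      ⟨fun j : ℕ => a + (j : ℤ), int_add_nat_inj a⟩ := by
  ext k
  simp only [Finset.mem_Icc, Finset.mem_map, Finset.mem_range, Function.Embedding.coeFn_mk]
  constructor
  · rintro ⟨h1, h2⟩
    exact ⟨(k - a).toNat, by omega, by show a + (((k - a).toNat : ℕ) : ℤ) = k; omega⟩
  · rintro ⟨j, hj, rfl⟩
    show a ≤ a + (j : ℤ) ∧ a + (j : ℤ) ≤ b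
    omega

lemma two_ne_zero_K : (2 : K) ≠ 0 := by
  have h2 : algebraMap (Polynomial ℚ) (RatFunc ℚ) 2 ≠ 0 :=
    RatFunc.algebraMap_ne_zero (by norm_num)
  rwa [map_ofNat] at h2

theorem anticommutation_phiBeta_star_phiBracket (m n : ℤ) :
    (Function.support fun k : ℤ => Acoef m k * Bcoef n k).Finite ∧
    2 * ∑ᶠ k : ℤ, Acoef m k * Bcoef n k
      = (if m = n then 2 else 0) + (if m = n - 1 then β else 0) := by
  have hsupp : (Function.support fun k : ℤ => Acoef m k * Bcoef n k)
      ⊆ ↑(Finset.Icc m n) := by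
    intro k hk
    simp only [Function.mem_support] at hk
    simp only [Finset.coe_Icc, Set.mem_Icc]
    constructor
    · by_contra h
      exact hk (by rw [Acoef_eq_zero (by omega), zero_mul])
    · by_contra h
      exact hk (by rw [Bcoef_eq_zero (by omega), mul_zero])
  refine ⟨(Finset.Icc m n).finite_toSet.subset hsupp, ?_⟩
  rw [finsum_eq_finset_sum_of_support_subset _ hsupp]
  rcases lt_or_ge n m with hnm | hmn
  · rw [Finset.Icc_eq_empty (by omega), Finset.sum_empty, mul_zero,
      if_neg (by omega), if_neg (by omega), add_zero]
  rcases le_or_gt 0 m with hm | hm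
  · -- case 0 ≤ m ≤ n
    obtain ⟨m', rfl⟩ := Int.eq_ofNat_of_zero_le hm
    obtain ⟨n', rfl⟩ := Int.eq_ofNat_of_zero_le (le_trans hm hmn)
    have hmn' : m' ≤ n' := by exact_mod_cast hmn
    rw [Icc_int_eq_map, Finset.sum_map]
    simp only [Function.Embedding.coeFn_mk]
    rw [show (((n' : ℤ)) + 1 - (m' : ℤ)).toNat = (n' - m') + 1 from by omega]
    set D := n' - m' with hD
    have hterm : ∀ j ∈ Finset.range (D + 1),
        Acoef (m' : ℤ) ((m' : ℤ) + (j : ℤ)) * Bcoef (n' : ℤ) ((m' : ℤ) + (j : ℤ))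
          = ((-1 : K) ^ (D - j) * ((n' - 1).choose (D - j) : K) * ((m' + j).choose m' : K))
              * (β / 2) ^ D := by
      intro j hj
      rw [Finset.mem_range] at hj
      rw [show (m' : ℤ) + (j : ℤ) = ((m' + j : ℕ) : ℤ) from by push_cast; ring]
      rw [Acoef_nat, Bcoef_nat, if_pos (by omega)]
      rw [show m' + j - m' = j from by omega, show n' - (m' + j) = D - j from by omega]
      rw [neg_pow]
      calc (β / 2) ^ j * ((m' + j).choose m' : K)
            * ((-1 : K) ^ (D - j) * (β / 2) ^ (D - j) * ((n' - 1).choose (D - j) : K))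
          = ((-1 : K) ^ (D - j) * ((n' - 1).choose (D - j) : K) * ((m' + j).choose m' : K))
              * ((β / 2) ^ j * (β / 2) ^ (D - j)) := by ring
        _ = _ := by rw [← pow_add, show j + (D - j) = D from by omega]
    rw [Finset.sum_congr rfl hterm, ← Finset.sum_mul, ← Finset.sum_range_reflect]
    have hterm2 : ∀ j ∈ Finset.range (D + 1),
        ((-1 : K) ^ (D - (D + 1 - 1 - j)) * ((n' - 1).choose (D - (D + 1 - 1 - j)) : K)
            * ((m' + (D + 1 - 1 - j)).choose m' : K))
          = (-1 : K) ^ j * ((n' - 1).choose j : K) * ((n' - j).choose m' : K) := by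
      intro j hj
      rw [Finset.mem_range] at hj
      rw [show D - (D + 1 - 1 - j) = j from by omega,
        show m' + (D + 1 - 1 - j) = n' - j from by omega]
    rw [Finset.sum_congr rfl hterm2]
    have hext : ∑ j ∈ Finset.range (D + 1),
          (-1 : K) ^ j * ((n' - 1).choose j : K) * ((n' - j).choose m' : K)
        = ∑ j ∈ Finset.range (n' + 1),
          (-1 : K) ^ j * ((n' - 1).choose j : K) * ((n' - j).choose m' : K) := by
      apply Finset.sum_subset (Finset.range_subset_range.2 (by omega))
      intro j hjr hj
      rw [Finset.mem_range] at hjr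
      rw [Finset.mem_range, not_lt] at hj
      simp [Nat.choose_eq_zero_of_lt (show n' - j < m' from by omega)]
    rw [hext]
    cases n' with
    | zero =>
      have hm0 : m' = 0 := by omega
      subst hm0
      norm_num
    | succ q =>
      simp only [Nat.succ_sub_one]
      rw [show q + 1 + 1 = q + 2 from rfl] at *
      rw [key q m']
      by_cases h1 : m' = q + 1
      · subst h1
        rw [if_pos rfl, if_neg (by omega), show D = 0 from by omega]
        rw [if_pos (by norm_num), if_neg (by push_cast; omega)]
        norm_num
      · by_cases h2 : m' = q
        · subst h2
          rw [if_neg h1, if_pos rfl, show D = 1 from by omega]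
          rw [if_neg (by push_cast; omega), if_pos (by push_cast; omega)]
          rw [pow_one]
          have h2 := two_ne_zero_K
          field_simp
          ring
        · rw [if_neg h1, if_neg h2, if_neg (by push_cast; omega),
            if_neg (by push_cast; omega)]
          norm_num
  · rcases le_or_gt n 0 with hn | hn
    · -- case m < 0, m ≤ n ≤ 0
      obtain ⟨M, rfl⟩ : ∃ M : ℕ, m = -(M : ℤ) := ⟨(-m).toNat, by omega⟩
      obtain ⟨N, rfl⟩ : ∃ N : ℕ, n = -(N : ℤ) := ⟨(-n).toNat, by omega⟩
      have hM : 1 ≤ M := by omega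
      have hNM : N ≤ M := by omega
      rw [Icc_int_eq_map, Finset.sum_map]
      simp only [Function.Embedding.coeFn_mk]
      rw [show ((-(N : ℤ)) + 1 - (-(M : ℤ))).toNat = (M - N) + 1 from by omega]
      set D := M - N with hD
      have hterm : ∀ j ∈ Finset.range (D + 1),
          Acoef (-(M : ℤ)) (-(M : ℤ) + (j : ℤ)) * Bcoef (-(N : ℤ)) (-(M : ℤ) + (j : ℤ))
            = ((-1 : K) ^ j * ((M - 1).choose j : K) * ((M - j).choose N : K))
                * (β / 2) ^ D := by
        intro j hj
        rw [Finset.mem_range] at hj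
        rw [show (-(M : ℤ)) + (j : ℤ) = -((M - j : ℕ) : ℤ) from by omega]
        rw [Acoef_neg M (M - j) hM, Bcoef_neg N (M - j), if_pos (by omega)]
        rw [show M - (M - j) = j from by omega, show (M - j) - N = D - j from by omega]
        rw [neg_pow]
        calc (-1 : K) ^ j * (β / 2) ^ j * ((M - 1).choose j : K)
              * ((β / 2) ^ (D - j) * ((M - j).choose N : K))
            = ((-1 : K) ^ j * ((M - 1).choose j : K) * ((M - j).choose N : K))
                * ((β / 2) ^ j * (β / 2) ^ (D - j)) := by ring
          _ = _ := by rw [← pow_add, show j + (D - j) = D from by omega]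
      rw [Finset.sum_congr rfl hterm, ← Finset.sum_mul]
      have hext : ∑ j ∈ Finset.range (D + 1),
            (-1 : K) ^ j * ((M - 1).choose j : K) * ((M - j).choose N : K)
          = ∑ j ∈ Finset.range (M + 1),
            (-1 : K) ^ j * ((M - 1).choose j : K) * ((M - j).choose N : K) := by
        apply Finset.sum_subset (Finset.range_subset_range.2 (by omega))
        intro j hjr hj
        rw [Finset.mem_range] at hjr
        rw [Finset.mem_range, not_lt] at hj
        simp [Nat.choose_eq_zero_of_lt (show M - j < N from by omega)]
      rw [hext]
      obtain ⟨q, rfl⟩ : ∃ q : ℕ, M = q + 1 := ⟨M - 1, by omega⟩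
      simp only [Nat.succ_sub_one]
      rw [show q + 1 + 1 = q + 2 from rfl]
      rw [key q N]
      by_cases h1 : N = q + 1
      · subst h1
        rw [if_pos rfl, if_neg (by omega), show D = 0 from by omega]
        rw [if_pos (by norm_num), if_neg (by push_cast; omega)]
        norm_num
      · by_cases h2 : N = q
        · subst h2
          rw [if_neg h1, if_pos rfl, show D = 1 from by omega]
          rw [if_neg (by push_cast; omega), if_pos (by push_cast; omega)]
          rw [pow_one]
          have h2 := two_ne_zero_K
          field_simp
          ring
        · rw [if_neg h1, if_neg h2, if_neg (by push_cast; omega),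
            if_neg (by push_cast; omega)]
          norm_num
    · -- case m < 0 < n : everything vanishes
      have hz : ∀ k ∈ Finset.Icc m n, Acoef m k * Bcoef n k = 0 := by
        intro k _
        rcases le_or_gt 0 k with hk | hk
        · rw [show Acoef m k = 0 from by rw [Acoef, if_pos hk, if_neg (by omega)], zero_mul]
        · rw [show Bcoef n k = 0 from by rw [Bcoef, if_neg (by omega), if_neg (by omega)],
            mul_zero]
      rw [Finset.sum_eq_zero hz, mul_zero, if_neg (by omega), if_neg (by omega), add_zero]

end
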